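/- arXiv:2412.10837 — 8 statements merged into one kernel-verified Lean document; each statement's English description precedes it below -/
import Mathlib

section
/- For every set partition π of [l+k], the linear map D_π : (ℝⁿ)^{⊗k} → (ℝⁿ)^{⊗l} is S_n-equivariant, i.e. D_π ∘ g^{⊗k} = g^{⊗l} ∘ D_π for every n×n permutation matrix g. -/
open Classical
noncomputable section

/-- The `k`-th tensor (Kronecker) power of an `n × n` real matrix, acting on
`(ℝⁿ)^{⊗k}` encoded as the coordinate space indexed by tuples `Fin k → Fin n`. -/
def tensorPow (n k : ℕ) (g : Matrix (Fin n) (Fin n) ℝ) :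
    Matrix (Fin k → Fin n) (Fin k → Fin n) ℝ :=
  Matrix.of fun I J => ∏ i, g (I i) (J i)

/-- The permutation matrix of `σ ∈ S_n`, sending `e_j` to `e_{σ j}`. -/
def permMat (n : ℕ) (σ : Equiv.Perm (Fin n)) : Matrix (Fin n) (Fin n) ℝ :=
  Matrix.of fun i j => if i = σ j then (1 : ℝ) else 0

/-- The matrix `D_π : (ℝⁿ)^{⊗k} → (ℝⁿ)^{⊗l}` associated to a set partition `π` of
`[l+k]` (encoded as a setoid on `Fin (l+k)`, top row first): its `(I, J)` entry is `1`
iff the combined tuple `(I, J)` is constant on each block of `π`, and `0` otherwise. -/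
def Dmat (n l k : ℕ) (π : Setoid (Fin (l + k))) :
    Matrix (Fin l → Fin n) (Fin k → Fin n) ℝ :=
  Matrix.of fun I J =>
    if ∀ x y, π.r x y → Fin.append I J x = Fin.append I J y then (1 : ℝ) else 0

/-! The permutation `σ` acts on tuples by `I ↦ σ ∘ I`, so `D_π` is equivariant because
whether a tuple is constant on the blocks of `π` is unchanged when an injective map is
applied to all of its entries. -/

theorem Fin.comp_append {α β : Type*} {l k : ℕ} (f : α → β) (I : Fin l → α) (J : Fin k → α) :
    f ∘ Fin.append I J = Fin.append (f ∘ I) (f ∘ J) := by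
  funext x
  refine Fin.addCases (fun i => ?_) (fun i => ?_) x <;> simp

theorem tensorPow_permMat_apply (n k : ℕ) (σ : Equiv.Perm (Fin n)) (I J : Fin k → Fin n) :
    tensorPow n k (permMat n σ) I J = if I = σ ∘ J then 1 else 0 := by
  simp only [tensorPow, permMat, Matrix.of_apply, Finset.prod_boole, funext_iff,
    Function.comp_apply, Finset.mem_univ, forall_true_left]

theorem tensorPow_permMat_mul_apply {m : Type*} [Fintype m] (n k : ℕ) (σ : Equiv.Perm (Fin n))
    (M : Matrix (Fin k → Fin n) m ℝ) (I : Fin k → Fin n) (j : m) :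
    (tensorPow n k (permMat n σ) * M) I j = M (⇑σ⁻¹ ∘ I) j := by
  have hrow : ∀ K, (I = σ ∘ K) ↔ (⇑σ⁻¹ ∘ I = K) := fun K => by
    rw [Equiv.Perm.coe_inv, Equiv.symm_comp_eq]
  simp only [Matrix.mul_apply, tensorPow_permMat_apply, hrow, ite_mul, one_mul, zero_mul,
    Finset.sum_ite_eq, Finset.mem_univ, if_true]

theorem mul_tensorPow_permMat_apply {m : Type*} (n k : ℕ) (σ : Equiv.Perm (Fin n))
    (M : Matrix m (Fin k → Fin n) ℝ) (i : m) (J : Fin k → Fin n) :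
    (M * tensorPow n k (permMat n σ)) i J = M i (σ ∘ J) := by
  simp only [Matrix.mul_apply, tensorPow_permMat_apply, mul_ite, mul_one, mul_zero,
    Finset.sum_ite_eq', Finset.mem_univ, if_true]

theorem Dmat_comp_s0 {n : ℕ} (l k : ℕ) (π : Setoid (Fin (l + k))) {f : Fin n → Fin n}
    (hf : Function.Injective f) (I : Fin l → Fin n) (J : Fin k → Fin n) :
    Dmat n l k π (f ∘ I) (f ∘ J) = Dmat n l k π I J := by
  simp only [Dmat, Matrix.of_apply, ← Fin.comp_append, Function.comp_apply, hf.eq_iff]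

theorem Dmat_equivariant_general (n k l : ℕ) (π : Setoid (Fin (l + k)))
    (σ : Equiv.Perm (Fin n)) :
    tensorPow n l (permMat n σ) * Dmat n l k π = Dmat n l k π * tensorPow n k (permMat n σ) := by
  ext I J
  rw [tensorPow_permMat_mul_apply, mul_tensorPow_permMat_apply,
    ← Dmat_comp_s0 l k π σ⁻¹.injective I (σ ∘ J)]
  simp [← Function.comp_assoc]

/-- for every set partition `π` of `[l+k]`, the map `D_π` is
`S_n`-equivariant: `g^{⊗l} ∘ D_π = D_π ∘ g^{⊗k}` for every permutation matrix `g`. -/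
theorem Dmat_equivariant (n k l : ℕ) (hn : 0 < n) (π : Setoid (Fin (l + k)))
    (σ : Equiv.Perm (Fin n)) :
    tensorPow n l (permMat n σ) * Dmat n l k π = Dmat n l k π * tensorPow n k (permMat n σ) :=
  Dmat_equivariant_general n k l π σ
end
end

section
/- Every S_n-equivariant linear map φ : (ℝⁿ)^{⊗k} → (ℝⁿ)^{⊗l} is an ℝ-linear combination of the maps D_π, where π ranges over all set partitions of [l+k]; equivalently, the linear map from the free ℝ-vector space on set partitions of [l+k] to Hom_{S_n}((ℝⁿ)^{⊗k}, (ℝⁿ)^{⊗l}) sending π to D_π is surjective. -/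
/-!
The index pairs `(I, J)` fall into `S_n`-orbits, one for each partition `π` of `[l+k]` that
occurs as the equality pattern `ker (I, J)`; two pairs with the same pattern differ by a
permutation of `[n]`. An equivariant `φ` is therefore constant on orbits, i.e. a combination
of the orbit indicators `E_π`. Conversely `D_π = ∑_{ρ ≥ π} E_ρ` is unitriangular for the
refinement order, so descending induction on `π` puts every `E_π` in the span of the `D_ρ`.
-/

open Classical
noncomputable section

instance Setoid.instFinite {α : Type*} [Finite α] : Finite (Setoid α) :=
  Finite.of_injective (fun r : Setoid α => ⇑r) fun _ _ => Setoid.eq_iff_rel_eq.2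

instance {α : Type*} [Finite α] : Fintype (Setoid α) := Fintype.ofFinite _

theorem Equiv.Perm.exists_comp_eq_of_ker_eq {α β : Type*} [Finite α] {f g : α → β}
    (h : Setoid.ker f = Setoid.ker g) : ∃ σ : Equiv.Perm β, σ ∘ f = g := by
  let e : Quotient (Setoid.ker f) ≃ Quotient (Setoid.ker g) :=
    Quotient.congrRight fun _ _ => by rw [h]
  obtain ⟨σ, hσ⟩ := Equiv.Perm.exists_extending_pair (Setoid.kerLift f)
    (Setoid.kerLift g ∘ e) (Setoid.kerLift_injective f)
    ((Setoid.kerLift_injective g).comp e.injective)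
  exact ⟨σ, funext fun a => hσ ⟦a⟧⟩

theorem apply_perm_comp_of_equivariant {n k l : ℕ}
    {φ : Matrix (Fin l → Fin n) (Fin k → Fin n) ℝ}
    (hφ : ∀ σ : Equiv.Perm (Fin n),
      tensorPow n l (permMat n σ) * φ = φ * tensorPow n k (permMat n σ))
    (σ : Equiv.Perm (Fin n)) (I : Fin l → Fin n) (J : Fin k → Fin n) :
    φ (σ ∘ I) (σ ∘ J) = φ I J := by
  have h := congr_fun₂ (hφ σ) (σ ∘ I) J
  simp only [Matrix.mul_apply, tensorPow_permMat_apply] at h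
  simpa [(Equiv.injective σ).comp_left.eq_iff, eq_comm] using h.symm

section OrbitBasis

variable {n l k : ℕ}

open scoped Matrix

/-- The orbit indicator `E_π`. -/
def orbitMat (n l k : ℕ) (π : Setoid (Fin (l + k))) :
    Matrix (Fin l → Fin n) (Fin k → Fin n) ℝ :=
  Matrix.of fun I J => if Setoid.ker (Fin.append I J) = π then 1 else 0

theorem Dmat_apply (π : Setoid (Fin (l + k))) (I : Fin l → Fin n) (J : Fin k → Fin n) :
    Dmat n l k π I J = if π ≤ Setoid.ker (Fin.append I J) then 1 else 0 := by
  simp [Dmat, Setoid.le_def, Setoid.ker_def]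

theorem Dmat_eq_sum_orbitMat (π : Setoid (Fin (l + k))) :
    Dmat n l k π = ∑ ρ ∈ Finset.univ.filter (π ≤ ·), orbitMat n l k ρ := by
  ext I J
  simp [Dmat_apply, Matrix.sum_apply, orbitMat, Finset.sum_ite_eq]

theorem orbitMat_mem_span_Dmat (π : Setoid (Fin (l + k))) :
    orbitMat n l k π ∈ Submodule.span ℝ (Set.range (Dmat n l k)) := by
  induction π using WellFoundedGT.induction with
  | ind π ih =>
    have hsplit : Finset.univ.filter (π ≤ ·) = insert π (Finset.univ.filter (π < ·)) := by
      ext ρ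
      simp [le_iff_lt_or_eq, eq_comm, or_comm]
    have hD := Dmat_eq_sum_orbitMat (n := n) π
    rw [hsplit, Finset.sum_insert (by simp)] at hD
    rw [← add_sub_cancel_right (orbitMat n l k π) (∑ ρ ∈ _, _), ← hD]
    exact sub_mem (Submodule.subset_span ⟨π, rfl⟩)
      (Submodule.sum_mem _ fun ρ hρ => ih ρ (Finset.mem_filter.mp hρ).2)

theorem mem_span_orbitMat {φ : Matrix (Fin l → Fin n) (Fin k → Fin n) ℝ}
    (hφ : ∀ I J I' J', Setoid.ker (Fin.append I J) = Setoid.ker (Fin.append I' J') →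
      φ I J = φ I' J') :
    φ ∈ Submodule.span ℝ (Set.range (orbitMat n l k)) := by
  have hsum : φ = ∑ π, φ ⊙ orbitMat n l k π := by
    ext I J
    simp [Matrix.sum_apply, orbitMat, Finset.sum_ite_eq]
  rw [hsum]
  refine Submodule.sum_mem _ fun π _ => ?_
  by_cases hπ : ∃ (I₀ : Fin l → Fin n) (J₀ : Fin k → Fin n), Setoid.ker (Fin.append I₀ J₀) = π
  · obtain ⟨I₀, J₀, h₀⟩ := hπ
    have : φ ⊙ orbitMat n l k π = φ I₀ J₀ • orbitMat n l k π := by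
      ext I J
      by_cases h : Setoid.ker (Fin.append I J) = π
      · simp [orbitMat, h, hφ I J I₀ J₀ (h.trans h₀.symm)]
      · simp [orbitMat, h]
    rw [this]
    exact Submodule.smul_mem _ _ (Submodule.subset_span ⟨π, rfl⟩)
  · have : φ ⊙ orbitMat n l k π = 0 := by
      ext I J
      simp [orbitMat, if_neg fun h => hπ ⟨I, J, h⟩]
    rw [this]
    exact Submodule.zero_mem _

theorem apply_eq_of_ker_append_eq {φ : Matrix (Fin l → Fin n) (Fin k → Fin n) ℝ}
    (hφ : ∀ σ : Equiv.Perm (Fin n),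
      tensorPow n l (permMat n σ) * φ = φ * tensorPow n k (permMat n σ))
    {I I' : Fin l → Fin n} {J J' : Fin k → Fin n}
    (h : Setoid.ker (Fin.append I J) = Setoid.ker (Fin.append I' J')) : φ I J = φ I' J' := by
  obtain ⟨σ, hσ⟩ := Equiv.Perm.exists_comp_eq_of_ker_eq h
  have hI : σ ∘ I = I' := funext fun i => by simpa using congr_fun hσ (Fin.castAdd k i)
  have hJ : σ ∘ J = J' := funext fun j => by simpa using congr_fun hσ (Fin.natAdd l j)
  rw [← hI, ← hJ, apply_perm_comp_of_equivariant hφ]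

end OrbitBasis

theorem Dmat_span_general (n k l : ℕ)
    (φ : Matrix (Fin l → Fin n) (Fin k → Fin n) ℝ)
    (hφ : ∀ σ : Equiv.Perm (Fin n),
      tensorPow n l (permMat n σ) * φ = φ * tensorPow n k (permMat n σ)) :
    φ ∈ Submodule.span ℝ (Set.range (Dmat n l k)) := by
  refine Submodule.span_le.2 ?_ (mem_span_orbitMat fun _ _ _ _ => apply_eq_of_ker_append_eq hφ)
  rintro _ ⟨π, rfl⟩
  exact orbitMat_mem_span_Dmat π

/-- every `S_n`-equivariant linear map `(ℝⁿ)^{⊗k} → (ℝⁿ)^{⊗l}` lies in the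
`ℝ`-span of the maps `D_π`, `π` ranging over all set partitions of `[l+k]`; i.e. the
map from the free vector space on set partitions to equivariant homs is surjective. -/
theorem Dmat_span (n k l : ℕ) (hn : 0 < n)
    (φ : Matrix (Fin l → Fin n) (Fin k → Fin n) ℝ)
    (hφ : ∀ σ : Equiv.Perm (Fin n),
      tensorPow n l (permMat n σ) * φ = φ * tensorPow n k (permMat n σ)) :
    φ ∈ Submodule.span ℝ (Set.range (Dmat n l k)) :=
  Dmat_span_general n k l φ hφ
end
end

section
/- Let π₁ be a set partition of [l+k] (top row {1,…,l}, bottom row {l+1,…,l+k}) and π₂ a set partition of [m+l] (top row {1,…,m}, bottom row {m+1,…,m+l}). Then D_{π₂} ∘ D_{π₁} = n^{c(π₂,π₁)} · D_{π₂∘π₁}; equivalently, for all I ∈ [n]^m and J ∈ [n]^k, Σ_{K ∈ [n]^l} δ_{π₂,(I,K)} δ_{π₁,(K,J)} = n^{c(π₂,π₁)} δ_{π₂∘π₁,(I,J)}. -/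
open Classical
noncomputable section

/-- Map from the disjoint union `A ⊔ B ⊔ C` (with `A = [m]`, `B = [l]`, `C = [k]`) to the
vertex set `[m+l]` of the upper diagram `π₂` (`a ∈ A` is vertex `a`, `b ∈ B` is vertex `m+b`;
`C` is not part of the upper diagram). -/
def toUpper (m l k : ℕ) : Fin m ⊕ (Fin l ⊕ Fin k) → Option (Fin (m + l))
  | Sum.inl a => some (Fin.castAdd l a)
  | Sum.inr (Sum.inl b) => some (Fin.natAdd m b)
  | Sum.inr (Sum.inr _) => none

/-- Map from `A ⊔ B ⊔ C` to the vertex set `[l+k]` of the lower diagram `π₁`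
(`b ∈ B` is vertex `b`, `c ∈ C` is vertex `l+c`; `A` is not part of the lower diagram). -/
def toLower (m l k : ℕ) : Fin m ⊕ (Fin l ⊕ Fin k) → Option (Fin (l + k))
  | Sum.inl _ => none
  | Sum.inr (Sum.inl b) => some (Fin.castAdd k b)
  | Sum.inr (Sum.inr c) => some (Fin.natAdd l c)

/-- The relation on `A ⊔ B ⊔ C` induced by the two diagrams `π₂` (on `A ⊔ B`) and
`π₁` (on `B ⊔ C`); the concatenated relation `∼` is its equivalence closure `EqvGen`. -/
def glue (m l k : ℕ) (π₂ : Setoid (Fin (m + l))) (π₁ : Setoid (Fin (l + k)))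
    (x y : Fin m ⊕ (Fin l ⊕ Fin k)) : Prop :=
  (∃ a b, toUpper m l k x = some a ∧ toUpper m l k y = some b ∧ π₂.r a b) ∨
  (∃ a b, toLower m l k x = some a ∧ toLower m l k y = some b ∧ π₁.r a b)

/-- The inclusion of the outer vertex set `[m+k]` into `A ⊔ B ⊔ C`. -/
def embMK (m l k : ℕ) (x : Fin (m + k)) : Fin m ⊕ (Fin l ⊕ Fin k) :=
  Fin.addCases (motive := fun _ => Fin m ⊕ (Fin l ⊕ Fin k))
    (fun a => Sum.inl a) (fun c => Sum.inr (Sum.inr c)) x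

/-- The composition `π₂ ∘ π₁` of set partition diagrams: the set partition of `[m+k]`
induced by the equivalence closure of `glue` on `A ⊔ C`. -/
def compSetoid (m l k : ℕ) (π₂ : Setoid (Fin (m + l))) (π₁ : Setoid (Fin (l + k))) :
    Setoid (Fin (m + k)) :=
  Setoid.comap (embMK m l k) (Relation.EqvGen.setoid (glue m l k π₂ π₁))

/-- `c(π₂, π₁)`: the number of `∼`-equivalence classes contained entirely in the
middle row `B`. -/
def removedCount (m l k : ℕ) (π₂ : Setoid (Fin (m + l))) (π₁ : Setoid (Fin (l + k))) : ℕ :=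
  Nat.card {q : Quotient (Relation.EqvGen.setoid (glue m l k π₂ π₁)) //
    ∀ x, Quotient.mk (Relation.EqvGen.setoid (glue m l k π₂ π₁)) x = q →
      ∃ b : Fin l, x = Sum.inr (Sum.inl b)}

/-!
The entry of `D_{π₂} D_{π₁}` at `(I, J)` counts the middle labellings `K` for which the
labelling `(I, K, J)` of `A ⊔ B ⊔ C` is constant on the blocks of `π₂` and of `π₁`, i.e. on the
classes of `∼`. Such labellings are exactly the functions on the `∼`-classes extending the values
prescribed by `(I, J)` on the classes meeting `A ⊔ C`. An extension exists iff `(I, J)` is constant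
on the blocks of `π₂ ∘ π₁`, and it is then free on the remaining classes, those contained in `B`,
which gives `n ^ c(π₂, π₁)` of them.
-/

section Extensions

variable {α β γ : Type*}

theorem respects_eqvGen_iff {r : α → α → Prop} {f : α → γ} :
    (∀ x y, Relation.EqvGen.setoid r x y → f x = f y) ↔ ∀ x y, r x y → f x = f y :=
  ⟨fun h x y hxy => h x y (.rel x y hxy), fun h _ _ hxy =>
    Setoid.eqvGen_le (s := Setoid.ker f) h hxy⟩

theorem respects_comap_option_iff {t : α → Option β} (ht : ∀ b, ∃ x, t x = some b)
    {f : α → γ} {g : β → γ} (hfg : ∀ x b, t x = some b → f x = g b) (r : β → β → Prop) :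
    (∀ x y, (∃ a b, t x = some a ∧ t y = some b ∧ r a b) → f x = f y) ↔
      ∀ a b, r a b → g a = g b := by
  constructor
  · intro h a b hab
    obtain ⟨x, hx⟩ := ht a
    obtain ⟨y, hy⟩ := ht b
    rw [← hfg x a hx, ← hfg y b hy]
    exact h x y ⟨a, b, hx, hy, hab⟩
  · rintro h x y ⟨a, b, hx, hy, hab⟩
    rw [hfg x a hx, hfg y b hy]
    exact h a b hab

def extensionsEquiv (φ : α → β) (v : α → γ) (hv : v.FactorsThrough φ) :
    {G : β → γ // G ∘ φ = v} ≃ (↥(Set.range φ)ᶜ → γ) where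
  toFun G b := G.1 b
  invFun h := ⟨fun b => if hb : b ∈ Set.range φ then v hb.choose else h ⟨b, hb⟩, by
    funext a
    have ha : φ a ∈ Set.range φ := ⟨a, rfl⟩
    simp only [Function.comp_apply, dif_pos ha]
    exact hv ha.choose_spec⟩
  left_inv G := by
    obtain ⟨G, hG⟩ := G
    ext b
    dsimp only
    split_ifs with hb
    · rw [← hG, Function.comp_apply, hb.choose_spec]
    · rfl
  right_inv h := by
    funext ⟨b, hb⟩
    exact dif_neg hb

theorem card_extensions [Finite β] [Finite γ] (φ : α → β) (v : α → γ) :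
    Nat.card {G : β → γ // G ∘ φ = v} =
      if v.FactorsThrough φ then Nat.card γ ^ Nat.card ↥(Set.range φ)ᶜ else 0 := by
  split_ifs with hv
  · rw [← Nat.card_fun]
    exact Nat.card_congr (extensionsEquiv φ v hv)
  · rw [Nat.card_eq_zero]
    refine .inl ⟨fun ⟨G, hG⟩ => hv fun a a' h => ?_⟩
    rw [← hG, Function.comp_apply, h, Function.comp_apply]

end Extensions

section Diagrams

variable {m l k : ℕ} {γ : Type*}

theorem toUpper_surjective (a : Fin (m + l)) : ∃ x, toUpper m l k x = some a :=
  Fin.addCases (fun a => ⟨.inl a, rfl⟩) (fun b => ⟨.inr (.inl b), rfl⟩) a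

theorem toLower_surjective (a : Fin (l + k)) : ∃ x, toLower m l k x = some a :=
  Fin.addCases (fun b => ⟨.inr (.inl b), rfl⟩) (fun c => ⟨.inr (.inr c), rfl⟩) a

theorem sum_elim_of_toUpper (I : Fin m → γ) (K : Fin l → γ) (J : Fin k → γ) :
    ∀ x a, toUpper m l k x = some a → Sum.elim I (Sum.elim K J) x = Fin.append I K a
  | .inl _, _, rfl => by simp
  | .inr (.inl _), _, rfl => by simp

theorem sum_elim_of_toLower (I : Fin m → γ) (K : Fin l → γ) (J : Fin k → γ) :
    ∀ x a, toLower m l k x = some a → Sum.elim I (Sum.elim K J) x = Fin.append K J a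
  | .inr (.inl _), _, rfl => by simp
  | .inr (.inr _), _, rfl => by simp

theorem sum_elim_embMK (I : Fin m → γ) (K : Fin l → γ) (J : Fin k → γ) (z : Fin (m + k)) :
    Sum.elim I (Sum.elim K J) (embMK m l k z) = Fin.append I J z :=
  Fin.addCases (fun a => by simp [embMK]) (fun c => by simp [embMK]) z

theorem respects_glue_iff (π₂ : Setoid (Fin (m + l))) (π₁ : Setoid (Fin (l + k)))
    (I : Fin m → γ) (K : Fin l → γ) (J : Fin k → γ) :
    (∀ x y, glue m l k π₂ π₁ x y →
        Sum.elim I (Sum.elim K J) x = Sum.elim I (Sum.elim K J) y) ↔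
      (∀ x y, π₂.r x y → Fin.append I K x = Fin.append I K y) ∧
        (∀ x y, π₁.r x y → Fin.append K J x = Fin.append K J y) := by
  simp only [glue, or_imp, forall_and]
  exact and_congr
    (respects_comap_option_iff toUpper_surjective (sum_elim_of_toUpper I K J) _)
    (respects_comap_option_iff toLower_surjective (sum_elim_of_toLower I K J) _)

theorem Dmat_mul_Dmat_apply (n : ℕ) (π₂ : Setoid (Fin (m + l))) (π₁ : Setoid (Fin (l + k)))
    (I : Fin m → Fin n) (J : Fin k → Fin n) :
    (Dmat n m l π₂ * Dmat n l k π₁) I J =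
      Nat.card {K : Fin l → Fin n // ∀ x y, Relation.EqvGen.setoid (glue m l k π₂ π₁) x y →
        Sum.elim I (Sum.elim K J) x = Sum.elim I (Sum.elim K J) y} := by
  simp only [Matrix.mul_apply, Dmat, Matrix.of_apply, ite_zero_mul_ite_zero, mul_one,
    respects_eqvGen_iff, respects_glue_iff, Finset.sum_boole, Nat.card_eq_fintype_card,
    Fintype.card_subtype]

def middleLabellingsEquivExtensions (S : Setoid (Fin m ⊕ (Fin l ⊕ Fin k)))
    (I : Fin m → γ) (J : Fin k → γ) :
    {K : Fin l → γ // ∀ x y, S x y →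
        Sum.elim I (Sum.elim K J) x = Sum.elim I (Sum.elim K J) y} ≃
      {G : Quotient S → γ // G ∘ (fun z => ⟦embMK m l k z⟧) = Fin.append I J} where
  toFun K := ⟨Quotient.lift _ K.2, funext (sum_elim_embMK I K.1 J)⟩
  invFun G := ⟨fun b => G.1 ⟦.inr (.inl b)⟧, by
    have hG : ∀ x, Sum.elim I (Sum.elim (fun b => G.1 ⟦.inr (.inl b)⟧) J) x = G.1 ⟦x⟧ := by
      rintro (a | b | c)
      · simpa [embMK] using (congrFun G.2 (Fin.castAdd k a)).symm
      · rfl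
      · simpa [embMK] using (congrFun G.2 (Fin.natAdd m c)).symm
    intro x y hxy
    rw [hG, hG, Quotient.sound hxy]⟩
  left_inv _ := rfl
  right_inv G := by
    obtain ⟨G, hG⟩ := G
    ext q
    induction q using Quotient.ind with
    | _ x =>
      rcases x with a | b | c
      · simpa [embMK] using (congrFun hG (Fin.castAdd k a)).symm
      · rfl
      · simpa [embMK] using (congrFun hG (Fin.natAdd m c)).symm

theorem card_compl_range_eq_removedCount (π₂ : Setoid (Fin (m + l))) (π₁ : Setoid (Fin (l + k))) :
    Nat.card ↥(Set.range fun z =>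
        (⟦embMK m l k z⟧ : Quotient (Relation.EqvGen.setoid (glue m l k π₂ π₁))))ᶜ =
      removedCount m l k π₂ π₁ := by
  refine Nat.card_congr (Equiv.subtypeEquivRight fun q => ?_)
  simp only [Set.mem_compl_iff, Set.mem_range, not_exists]
  constructor
  · rintro h (a | b | c) rfl
    · exact absurd (by simp [embMK]) (h (Fin.castAdd k a))
    · exact ⟨b, rfl⟩
    · exact absurd (by simp [embMK]) (h (Fin.natAdd m c))
  · intro h z hz
    obtain ⟨b, hb⟩ := h _ hz
    revert hb
    refine Fin.addCases (fun a => ?_) (fun c => ?_) z <;> simp [embMK]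

theorem factorsThrough_mk_embMK_iff (π₂ : Setoid (Fin (m + l))) (π₁ : Setoid (Fin (l + k)))
    (f : Fin (m + k) → γ) :
    f.FactorsThrough
        (fun z => (⟦embMK m l k z⟧ : Quotient (Relation.EqvGen.setoid (glue m l k π₂ π₁)))) ↔
      ∀ x y, (compSetoid m l k π₂ π₁).r x y → f x = f y := by
  simp only [Function.FactorsThrough, Quotient.eq]
  rfl

end Diagrams

theorem Dmat_comp_general (n k l m : ℕ)
    (π₁ : Setoid (Fin (l + k))) (π₂ : Setoid (Fin (m + l))) :
    Dmat n m l π₂ * Dmat n l k π₁ =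
      (n : ℝ) ^ removedCount m l k π₂ π₁ • Dmat n m k (compSetoid m l k π₂ π₁) := by
  ext I J
  rw [Dmat_mul_Dmat_apply, Nat.card_congr (middleLabellingsEquivExtensions _ I J), card_extensions,
    Nat.card_fin, card_compl_range_eq_removedCount, factorsThrough_mk_embMK_iff]
  simp only [Matrix.smul_apply, Dmat, Matrix.of_apply, smul_eq_mul, mul_ite, mul_one, mul_zero]
  split_ifs <;> push_cast <;> rfl

/-- `D_{π₂} ∘ D_{π₁} = n^{c(π₂,π₁)} · D_{π₂∘π₁}`. -/
theorem Dmat_comp (n k l m : ℕ) (hn : 0 < n)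
    (π₁ : Setoid (Fin (l + k))) (π₂ : Setoid (Fin (m + l))) :
    Dmat n m l π₂ * Dmat n l k π₁ =
      (n : ℝ) ^ removedCount m l k π₂ π₁ • Dmat n m k (compSetoid m l k π₂ π₁) :=
  Dmat_comp_general n k l m π₁ π₂
end
end

section
/- For every perfect matching β of [l+k], the linear map F_β : (ℝⁿ)^{⊗k} → (ℝⁿ)^{⊗l} is Sp(n)-equivariant: g^{⊗l} ∘ F_β = F_β ∘ g^{⊗k} for every symplectic matrix g ∈ Sp(n). -/
open Classical
noncomputable section

/-- The Gram matrix `ε` of the standard symplectic form `Ω` on `ℝ^{2m}`, in the basis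
ordered `1, 1′, …, m, m′` (index `2a` is `a+1` and index `2a+1` is `(a+1)′`):
`ε_{a,b′} = −ε_{a′,b} = δ_{a,b}` and `ε_{a,b} = ε_{a′,b′} = 0`. -/
def eps (m : ℕ) : Matrix (Fin (2 * m)) (Fin (2 * m)) ℝ :=
  Matrix.of fun i j =>
    if i.val + 1 = j.val ∧ i.val % 2 = 0 then (1 : ℝ)
    else if j.val + 1 = i.val ∧ j.val % 2 = 0 then (-1 : ℝ) else 0

/-- The matrix `F_β : (ℝⁿ)^{⊗k} → (ℝⁿ)^{⊗l}` (`n = 2m`) associated to a perfect matching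
`β` of `[l+k]` encoded by an involution `f`: the `(I,J)` entry is the product, over the
blocks `{x, f x}` (with `x < f x`), of `γ_{x,f x}`, where `γ` is `ε` on same-row blocks
and the Kronecker delta on blocks meeting both rows. -/
def Fmat (m l k : ℕ) (f : Fin (l + k) → Fin (l + k)) :
    Matrix (Fin l → Fin (2 * m)) (Fin k → Fin (2 * m)) ℝ :=
  Matrix.of fun I J =>
    ∏ x ∈ Finset.univ.filter (fun x => x < f x),
      (if ((x : Fin (l + k)).val < l ↔ (f x).val < l)
        then eps m (Fin.append I J x) (Fin.append I J (f x))
        else (if Fin.append I J x = Fin.append I J (f x) then (1 : ℝ) else 0))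

/-!
Expand both sides entrywise as a sum, over all labellings `A` of the `l + k` points by basis
indices, of `∏ₓ Uₓ (cₓ, Aₓ)` times the product of the block weights `γ`, where `c = (I, J)` is
the outer index and `Uₓ` is `g` resp. `1` on the top row and `1` resp. `gᵀ` on the bottom row.
Since `β` is a perfect matching the sum factors over the blocks `{x, y}`, each contributing
`(Uₓ γ U_yᵀ) (cₓ, c_y)`. A block meeting both rows contributes `g` or `gᵀ` on both sides; a
top-row block compares `g ε gᵀ` with `ε`, a bottom-row block `ε` with `gᵀ ε g`, and both agree
because `gᵀ ε g = ε` forces `g ε gᵀ = ε` when `ε² = -1`.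
-/

open Finset
open scoped Matrix

section Involution

variable {ι : Type*} [LinearOrder ι] {f : ι → ι}

theorem Function.Involutive.lt_apply_of_not_lt (hf : Function.Involutive f)
    (hf' : ∀ x, f x ≠ x) {x : ι} (hx : ¬ x < f x) : f x < f (f x) := by
  rw [hf]
  exact lt_of_le_of_ne (not_lt.mp hx) (hf' x)

theorem Function.Involutive.prod_eq_prod_filter_lt_mul [Fintype ι] {M : Type*}
    [CommMonoid M] (hf : Function.Involutive f) (hf' : ∀ x, f x ≠ x) (h : ι → M) :
    ∏ x, h x = ∏ x ∈ univ.filter (fun x => x < f x), h x * h (f x) := by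
  rw [← prod_filter_mul_prod_filter_not univ (fun x => x < f x), prod_mul_distrib]
  congr 1
  refine prod_nbij' f f (fun x hx => ?_) (fun x hx => ?_) (fun x _ => hf x) (fun x _ => hf x)
    (fun x _ => by rw [hf])
  · simp only [mem_filter, mem_univ, true_and] at hx ⊢
    exact hf.lt_apply_of_not_lt hf' hx
  · simp only [mem_filter, mem_univ, true_and] at hx ⊢
    rw [hf]
    exact not_lt.mpr hx.le

theorem Function.Involutive.sum_prod_filter_lt [Fintype ι] {κ R : Type*} [Fintype κ]
    [CommSemiring R] (hf : Function.Involutive f) (hf' : ∀ x, f x ≠ x) (Φ : ι → κ → κ → R) :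
    ∑ A : ι → κ, ∏ x ∈ univ.filter (fun x => x < f x), Φ x (A x) (A (f x))
      = ∏ x ∈ univ.filter (fun x => x < f x), ∑ a, ∑ b, Φ x a b := by
  have hmem : ∀ x, x ∈ univ.filter (fun x => x < f x) ↔ x < f x := by simp
  simp_rw [prod_subtype _ hmem, ← Fintype.sum_prod_type', Fintype.prod_sum]
  refine Fintype.sum_bijective (fun A x => (A x.1, A (f x.1))) ?_ _ _ fun A => rfl
  refine Function.bijective_iff_has_inverse.mpr
    ⟨fun P y => if h : y < f y then (P ⟨y, h⟩).1
        else (P ⟨f y, hf.lt_apply_of_not_lt hf' h⟩).2,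
      fun A => funext fun y => ?_, fun P => funext fun ⟨x, hx⟩ => ?_⟩
  · by_cases h : y < f y <;> simp [h, hf y]
  · have hfx : ¬ f x < f (f x) := by rw [hf]; exact asymm hx
    have : (⟨f (f x), hf.lt_apply_of_not_lt hf' hfx⟩ : {x // x < f x}) = ⟨x, hx⟩ :=
      Subtype.ext (hf x)
    simp [hx, hfx, this]

theorem Function.Involutive.sum_prod_apply_mul_prod_filter_lt [Fintype ι] {κ R : Type*}
    [Fintype κ] [CommSemiring R] (hf : Function.Involutive f) (hf' : ∀ x, f x ≠ x)
    (U γ : ι → Matrix κ κ R) (c : ι → κ) :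
    ∑ A : ι → κ, (∏ x, U x (c x) (A x)) *
        ∏ x ∈ univ.filter (fun x => x < f x), γ x (A x) (A (f x))
      = ∏ x ∈ univ.filter (fun x => x < f x), (U x * γ x * (U (f x))ᵀ) (c x) (c (f x)) := by
  calc _ = ∑ A : ι → κ, ∏ x ∈ univ.filter (fun x => x < f x),
          U x (c x) (A x) * U (f x) (c (f x)) (A (f x)) * γ x (A x) (A (f x)) := by
        refine sum_congr rfl fun A _ => ?_
        rw [hf.prod_eq_prod_filter_lt_mul hf', ← prod_mul_distrib]
    _ = _ := hf.sum_prod_filter_lt hf' fun x a b =>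
          U x (c x) a * U (f x) (c (f x)) b * γ x a b
    _ = _ := by
        refine prod_congr rfl fun x _ => ?_
        simp_rw [Matrix.mul_apply, Matrix.transpose_apply, sum_mul]
        rw [sum_comm]
        exact sum_congr rfl fun a _ => sum_congr rfl fun b _ => by ring

end Involution

section TensorIndices

variable {κ R : Type*} [Fintype κ] [CommSemiring R]

theorem Matrix.sum_prod_one_apply_mul {ι : Type*} [Fintype ι] [DecidableEq ι] [DecidableEq κ]
    (c : ι → κ) (Φ : (ι → κ) → R) :
    ∑ A, (∏ i, (1 : Matrix κ κ R) (c i) (A i)) * Φ A = Φ c := by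
  simp [Matrix.one_apply, Fintype.prod_boole, ← funext_iff]

variable {l k : ℕ}

theorem sum_prod_ite_apply_append_mul (P Q : Matrix κ κ R) (I : Fin l → κ) (J : Fin k → κ)
    (Φ : (Fin (l + k) → κ) → R) :
    ∑ A, (∏ x : Fin (l + k), (if (x : ℕ) < l then P else Q) (Fin.append I J x) (A x)) * Φ A
      = ∑ K, ∑ K', (∏ i, P (I i) (K i)) * (∏ i, Q (J i) (K' i)) * Φ (Fin.append K K') := by
  rw [← (Fin.appendEquiv l k).sum_comp, Fintype.sum_prod_type]
  simp [Fin.prod_univ_add]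
  rfl

variable [DecidableEq κ] (g : Matrix κ κ R) (I : Fin l → κ) (J : Fin k → κ)
  (Φ : (Fin (l + k) → κ) → R)

theorem sum_prod_apply_mul_append_eq :
    ∑ K, (∏ i, g (I i) (K i)) * Φ (Fin.append K J)
      = ∑ A, (∏ x : Fin (l + k), (if (x : ℕ) < l then g else 1) (Fin.append I J x) (A x)) *
          Φ A := by
  simp_rw [sum_prod_ite_apply_append_mul, mul_assoc, ← mul_sum,
    Matrix.sum_prod_one_apply_mul J fun K' => Φ (Fin.append _ K')]

theorem sum_mul_prod_apply_append_eq :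
    ∑ K, Φ (Fin.append I K) * ∏ i, g (K i) (J i)
      = ∑ A, (∏ x : Fin (l + k), (if (x : ℕ) < l then 1 else gᵀ) (Fin.append I J x) (A x)) *
          Φ A := by
  rw [sum_prod_ite_apply_append_mul, sum_comm]
  refine sum_congr rfl fun K' _ => ?_
  simp_rw [mul_right_comm _ (∏ i, gᵀ (J i) (K' i)), mul_assoc]
  rw [Matrix.sum_prod_one_apply_mul I fun K => Φ (Fin.append K K') * ∏ i, gᵀ (J i) (K' i)]
  rfl

end TensorIndices

theorem Matrix.mul_mul_transpose_eq_of_transpose_mul_mul_eq {n R : Type*} [Fintype n]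
    [DecidableEq n] [CommRing R] {ε g : Matrix n n R} (hε : ε * ε = -1)
    (hg : gᵀ * ε * g = ε) : g * ε * gᵀ = ε := by
  have hinv : (-ε * gᵀ * ε) * g = 1 := by
    simp only [Matrix.neg_mul, Matrix.mul_assoc, hg, hε, neg_neg]
  calc g * ε * gᵀ = g * (-ε * gᵀ * ε) * ε := by simp [Matrix.mul_assoc, hε]
    _ = ε := by rw [mul_eq_one_comm.mp hinv, Matrix.one_mul]

theorem eps_mul_eps (m : ℕ) : eps m * eps m = -1 := by
  ext i j
  let p : Fin (2 * m) :=
    ⟨if i.val % 2 = 0 then i.val + 1 else i.val - 1, by split_ifs <;> omega⟩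
  rw [Matrix.mul_apply, sum_eq_single p]
  · simp only [eps, p, Matrix.of_apply, Matrix.neg_apply, Matrix.one_apply, Fin.ext_iff]
    split_ifs <;> first | omega | norm_num
  · intro b _ hb
    have hb' : b.val ≠ p.val := fun h => hb (Fin.ext h)
    simp only [eps, p, Matrix.of_apply] at hb' ⊢
    split_ifs at hb' ⊢ <;> first | omega | ring
  · simp

theorem Fmat_apply_eq_prod (m l k : ℕ) (f : Fin (l + k) → Fin (l + k))
    (I : Fin l → Fin (2 * m)) (J : Fin k → Fin (2 * m)) :
    Fmat m l k f I J = ∏ x ∈ univ.filter (fun x => x < f x),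
      (if ((x : ℕ) < l ↔ (f x : ℕ) < l) then eps m else 1) (Fin.append I J x)
        (Fin.append I J (f x)) := by
  simp only [Fmat, Matrix.of_apply]
  refine prod_congr rfl fun x _ => ?_
  split_ifs <;> simp [Matrix.one_apply, *]

theorem Fmat_symplectic_equivariant_general (m k l : ℕ)
    (f : Fin (l + k) → Fin (l + k)) (hf : ∀ x, f (f x) = x) (hf' : ∀ x, f x ≠ x)
    (g : Matrix (Fin (2 * m)) (Fin (2 * m)) ℝ) (hg : g.transpose * eps m * g = eps m) :
    tensorPow (2 * m) l g * Fmat m l k f = Fmat m l k f * tensorPow (2 * m) k g := by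
  have hg' := Matrix.mul_mul_transpose_eq_of_transpose_mul_mul_eq (eps_mul_eps m) hg
  have hfi : Function.Involutive f := hf
  ext I J
  simp only [Matrix.mul_apply, tensorPow, Matrix.of_apply, Fmat_apply_eq_prod]
  set γ : Fin (l + k) → Matrix (Fin (2 * m)) (Fin (2 * m)) ℝ :=
    fun x => if ((x : ℕ) < l ↔ (f x : ℕ) < l) then eps m else 1
  set Γ : (Fin (l + k) → Fin (2 * m)) → ℝ :=
    fun A => ∏ x ∈ univ.filter (fun x => x < f x), γ x (A x) (A (f x))
  rw [sum_prod_apply_mul_append_eq g I J Γ, sum_mul_prod_apply_append_eq g I J Γ,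
    hfi.sum_prod_apply_mul_prod_filter_lt hf', hfi.sum_prod_apply_mul_prod_filter_lt hf']
  refine prod_congr rfl fun x _ => ?_
  by_cases hx : (x : ℕ) < l <;> by_cases hfx : (f x : ℕ) < l <;> simp [γ, hx, hfx, hg, hg']

/-- for every perfect matching `β` of `[l+k]` (encoded by a fixed-point-free
involution `f`), the map `F_β` is `Sp(n)`-equivariant (`n = 2m`):
`g^{⊗l} ∘ F_β = F_β ∘ g^{⊗k}` for every symplectic matrix `g`. -/
theorem Fmat_symplectic_equivariant (m k l : ℕ) (hm : 0 < m)
    (f : Fin (l + k) → Fin (l + k)) (hf : ∀ x, f (f x) = x) (hf' : ∀ x, f x ≠ x)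
    (g : Matrix (Fin (2 * m)) (Fin (2 * m)) ℝ) (hg : g.transpose * eps m * g = eps m) :
    tensorPow (2 * m) l g * Fmat m l k f = Fmat m l k f * tensorPow (2 * m) k g :=
  Fmat_symplectic_equivariant_general m k l f hf hf' g hg
end
end

section
/- For every (l+k)\n-diagram α, the linear map H_α : (ℝⁿ)^{⊗k} → (ℝⁿ)^{⊗l} is SO(n)-equivariant: g^{⊗l} ∘ H_α = H_α ∘ g^{⊗k} for every special orthogonal matrix g ∈ SO(n). -/
/-!
View `H_α` as a tensor `T` in `(ℝⁿ)^{⊗(l+k)}`. Since `g^{⊗k}` is orthogonal, the equivariance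
`g^{⊗l} H_α = H_α g^{⊗k}` is the same as `g^{⊗l} H_α (g^{⊗k})ᵀ = H_α`, i.e. invariance of `T` under
`g^{⊗(l+k)}`. Relabel the legs of `T` as the free vertices followed by the two ends of each size-two
block: `T` becomes the outer product of the determinant tensor on the free legs, invariant because
`det g = 1`, with one Kronecker delta per block, invariant because `g gᵀ = 1`. Invariance survives
relabelling of legs, outer products and products over a family of blocks.
-/

open Classical
noncomputable section

/-- The matrix `H_α : (ℝⁿ)^{⊗k} → (ℝⁿ)^{⊗l}` associated to an `(l+k)\n`-diagram `α`,
encoded by an involution `f` of `Fin (l+k)` whose fixed points (exactly `n` of them,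
by `hcard`) are the free vertices and whose 2-cycles are the size-two blocks.
The `(I,J)` entry is `det(e_{i_{t₁}} | … | e_{i_{t_s}} | e_{i_{l+b₁}} | … | e_{i_{l+b_{n−s}}})`
(columns indexed by the free vertices: those in the top row in increasing order followed
by those in the bottom row in increasing order, which is exactly the increasing order on
`Fin (l+k)`) times the product of Kronecker deltas over the size-two blocks. -/
def Hmat (n l k : ℕ) (f : Fin (l + k) → Fin (l + k))
    (hcard : (Finset.univ.filter (fun x => f x = x)).card = n) :
    Matrix (Fin l → Fin n) (Fin k → Fin n) ℝ :=
  Matrix.of fun I J =>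
    (Matrix.det (Matrix.of fun r c : Fin n =>
      if r = Fin.append I J
        (((Finset.univ.filter (fun x : Fin (l + k) => f x = x)).orderIsoOfFin hcard c : Fin (l + k)))
      then (1 : ℝ) else 0))
    * ∏ x ∈ Finset.univ.filter (fun x : Fin (l + k) => x < f x),
        (if Fin.append I J x = Fin.append I J (f x) then (1 : ℝ) else 0)

section InvariantTensor

variable {R m : Type*} [CommRing R] [Fintype m]
  {ι κ : Type*} [Fintype ι] [DecidableEq ι] [Fintype κ] [DecidableEq κ]

/-- `T` is the coordinate array of a tensor in `(R^m)^{⊗ι}`; invariance means `g^{⊗ι} T = T`. -/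
def IsInvariantTensor (g : Matrix m m R) (T : (ι → m) → R) : Prop :=
  ∀ A, ∑ B, (∏ i, g (A i) (B i)) * T B = T A

variable {g : Matrix m m R}

theorem IsInvariantTensor.comp_equiv {T : (ι → m) → R} (hT : IsInvariantTensor g T)
    (σ : ι ≃ κ) :
    IsInvariantTensor g (fun A : κ → m => T (A ∘ σ)) := by
  intro A
  beta_reduce
  rw [← hT (A ∘ σ)]
  refine Fintype.sum_equiv (σ.symm.arrowCongr (Equiv.refl m)) _ _ fun B => ?_
  simp only [Equiv.arrowCongr_apply, Equiv.symm_symm, Equiv.coe_refl]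
  rw [← σ.prod_comp]
  rfl

theorem Fintype.sum_sum_elim {M : Type*} [AddCommMonoid M] (F : (ι ⊕ κ → m) → M) :
    ∑ B, F B = ∑ B₁ : ι → m, ∑ B₂ : κ → m, F (Sum.elim B₁ B₂) := by
  rw [← Fintype.sum_prod_type']
  exact Fintype.sum_equiv (Equiv.sumArrowEquivProdArrow ι κ m) _ _ fun B => by
    simp [Equiv.sumArrowEquivProdArrow]

theorem IsInvariantTensor.tmul {T₁ : (ι → m) → R} {T₂ : (κ → m) → R}
    (h₁ : IsInvariantTensor g T₁) (h₂ : IsInvariantTensor g T₂) :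
    IsInvariantTensor g (fun A : ι ⊕ κ → m => T₁ (A ∘ Sum.inl) * T₂ (A ∘ Sum.inr)) := by
  intro A
  beta_reduce
  rw [Fintype.sum_sum_elim, ← h₁, ← h₂, Finset.sum_mul_sum]
  refine Finset.sum_congr rfl fun B₁ _ => Finset.sum_congr rfl fun B₂ _ => ?_
  simp only [Fintype.prod_sum_type, Sum.elim_inl, Sum.elim_inr, Sum.elim_comp_inl,
    Sum.elim_comp_inr, Function.comp_apply]
  ring

theorem IsInvariantTensor.pi {T : (κ → m) → R} (hT : IsInvariantTensor g T) (Q : Type*)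
    [Fintype Q] [DecidableEq Q] :
    IsInvariantTensor g (fun A : Q × κ → m => ∏ q, T (fun j => A (q, j))) := by
  intro A
  calc ∑ B : Q × κ → m, (∏ x, g (A x) (B x)) * ∏ q, T (fun j => B (q, j))
      = ∑ C : Q → κ → m, ∏ q, (∏ j, g (A (q, j)) (C q j)) * T (C q) :=
        Fintype.sum_equiv (Equiv.curry Q κ m) _ _ fun B => by
          simp only [Fintype.prod_prod_type, Finset.prod_mul_distrib, Equiv.curry_apply]
          rfl
    _ = ∏ q, ∑ b, (∏ j, g (A (q, j)) (b j)) * T b :=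
        (Fintype.prod_sum fun q (b : κ → m) => (∏ j, g (A (q, j)) (b j)) * T b).symm
    _ = ∏ q, T (fun j => A (q, j)) := Finset.prod_congr rfl fun q _ => hT (fun j => A (q, j))

variable [DecidableEq m]

theorem isInvariantTensor_kroneckerDelta (hg : g * g.transpose = 1) :
    IsInvariantTensor g (fun a : Fin 2 → m => if a 0 = a 1 then (1 : R) else 0) := by
  intro a
  rw [Fintype.sum_equiv (piFinTwoEquiv fun _ => m) _
    (fun p => g (a 0) p.1 * g (a 1) p.2 * if p.1 = p.2 then 1 else 0)
    (fun B => by simp [Fin.prod_univ_two]), Fintype.sum_prod_type]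
  simp only [mul_ite, mul_one, mul_zero, Finset.sum_ite_eq, Finset.mem_univ, if_true]
  rw [← Matrix.one_apply, ← hg, Matrix.mul_apply]
  rfl

theorem isInvariantTensor_det (hdet : g.det = 1) :
    IsInvariantTensor g fun A : m → m =>
      (Matrix.of fun r c => if r = A c then (1 : R) else 0).det := by
  intro A
  set D := (Matrix.detRowAlternating : (m → R) [⋀^m]→ₗ[R] R).toMultilinearMap
  have hrows : ∀ B : m → m, (Matrix.of fun r c => if r = B c then (1 : R) else 0).det =
      D fun c => Pi.single (B c) 1 := fun B => by
    rw [← Matrix.det_transpose]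
    congr 1
    ext c r
    simp [Pi.single_apply]
  have hmul : (Matrix.of fun c r => g (A c) r) =
      (Matrix.of fun r c => if r = A c then (1 : R) else 0).transpose * g := by
    ext c r
    simp [Matrix.mul_apply]
  calc ∑ B : m → m, (∏ c, g (A c) (B c)) * (Matrix.of fun r c => if r = B c then (1 : R) else 0).det
      = ∑ B : m → m, D fun c => g (A c) (B c) • Pi.single (B c) 1 := by
        simp_rw [hrows, D.map_smul_univ, smul_eq_mul]
    _ = D fun c => ∑ j, g (A c) j • Pi.single j 1 := by rw [D.map_sum]
    _ = D fun c => g (A c) := by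
        congr 1
        ext c r
        simp [Finset.sum_apply, Pi.single_apply]
    _ = (Matrix.of fun c r => g (A c) r).det := rfl
    _ = _ := by rw [hmul, Matrix.det_mul, hdet, mul_one, Matrix.det_transpose]

end InvariantTensor

section TensorPow

variable {n : ℕ}

theorem tensorPow_transpose (k : ℕ) (g : Matrix (Fin n) (Fin n) ℝ) :
    (tensorPow n k g).transpose = tensorPow n k g.transpose := by
  ext I J
  simp [tensorPow, Matrix.transpose_apply]

theorem tensorPow_mul (k : ℕ) (p q : Matrix (Fin n) (Fin n) ℝ) :
    tensorPow n k (p * q) = tensorPow n k p * tensorPow n k q := by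
  ext I J
  simp only [tensorPow, Matrix.mul_apply, Matrix.of_apply, Fintype.prod_sum,
    Finset.prod_mul_distrib]

theorem tensorPow_one (k : ℕ) : tensorPow n k (1 : Matrix (Fin n) (Fin n) ℝ) = 1 := by
  ext I J
  by_cases h : I = J
  · subst h
    simp [tensorPow]
  · obtain ⟨i, hi⟩ := Function.ne_iff.1 h
    rw [Matrix.one_apply_ne h]
    exact Finset.prod_eq_zero (Finset.mem_univ i) (Matrix.one_apply_ne hi)

theorem tensorPow_mul_eq_mul_tensorPow {l k : ℕ} {g : Matrix (Fin n) (Fin n) ℝ}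
    (hg : g.transpose * g = 1) {M : Matrix (Fin l → Fin n) (Fin k → Fin n) ℝ}
    (hM : IsInvariantTensor g fun A : Fin l ⊕ Fin k → Fin n => M (A ∘ Sum.inl) (A ∘ Sum.inr)) :
    tensorPow n l g * M = M * tensorPow n k g := by
  have hconj : tensorPow n l g * M * (tensorPow n k g).transpose = M := by
    ext I J
    have hIJ := hM (Sum.elim I J)
    simp only [Sum.elim_comp_inl, Sum.elim_comp_inr] at hIJ
    rw [← hIJ, Fintype.sum_sum_elim, Matrix.mul_apply, Finset.sum_comm]
    simp only [Matrix.mul_apply, Matrix.transpose_apply, tensorPow, Matrix.of_apply, Finset.sum_mul,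
      Fintype.prod_sum_type, Sum.elim_inl, Sum.elim_inr, Sum.elim_comp_inl, Sum.elim_comp_inr]
    exact Finset.sum_congr rfl fun _ _ => Finset.sum_congr rfl fun _ _ => by ring
  calc tensorPow n l g * M
      = tensorPow n l g * M * ((tensorPow n k g).transpose * tensorPow n k g) := by
        rw [tensorPow_transpose, ← tensorPow_mul, hg, tensorPow_one, Matrix.mul_one]
    _ = M * tensorPow n k g := by rw [← Matrix.mul_assoc, hconj]

end TensorPow

section Diagram

variable {n N : ℕ} (f : Fin N → Fin N) (hcard : (Finset.univ.filter fun x => f x = x).card = n)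

/-- The free vertices in increasing order, then each block `{x, f x}` with `x < f x`
as `(x, 0), (x, 1)`. -/
def diagramEquiv (hf : ∀ x, f (f x) = x) : Fin n ⊕ {x // x < f x} × Fin 2 ≃ Fin N :=
  Equiv.ofBijective
    (Sum.elim (fun c => ((Finset.univ.filter fun x => f x = x).orderIsoOfFin hcard c : Fin N))
      fun p => ![p.1.1, f p.1.1] p.2) <| by
    set e := (Finset.univ.filter fun x => f x = x).orderIsoOfFin hcard
    have hfe : ∀ c, f (e c) = e c := fun c => (Finset.mem_filter.1 (e c).2).2
    constructor
    · rintro (c | ⟨⟨q, hq⟩, i⟩) (c' | ⟨⟨q', hq'⟩, i'⟩) h <;> simp at h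
      · exact congrArg _ h
      · fin_cases i' <;> simp at h <;> grind [hfe c]
      · fin_cases i <;> simp at h <;> grind [hfe c']
      · fin_cases i <;> fin_cases i' <;> simp at h ⊢ <;> grind
    · intro x
      rcases lt_trichotomy x (f x) with hx | hx | hx
      · exact ⟨.inr (⟨x, hx⟩, 0), rfl⟩
      · exact ⟨.inl (e.symm ⟨x, by simpa using hx.symm⟩), by simp⟩
      · exact ⟨.inr (⟨f x, by rwa [hf]⟩, 1), by simp [hf]⟩

def diagramTensor (A : Fin N → Fin n) : ℝ :=
  (Matrix.det (Matrix.of fun r c : Fin n =>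
      if r = A (((Finset.univ.filter (fun x : Fin N => f x = x)).orderIsoOfFin hcard c : Fin N))
      then (1 : ℝ) else 0))
  * ∏ x ∈ Finset.univ.filter (fun x : Fin N => x < f x),
      (if A x = A (f x) then (1 : ℝ) else 0)

theorem isInvariantTensor_diagramTensor (hf : ∀ x, f (f x) = x) {g : Matrix (Fin n) (Fin n) ℝ}
    (hg : g * g.transpose = 1) (hdet : g.det = 1) :
    IsInvariantTensor g (diagramTensor f hcard) := by
  have h := ((isInvariantTensor_det hdet).tmul
    ((isInvariantTensor_kroneckerDelta hg).pi _)).comp_equiv (diagramEquiv f hcard hf)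
  convert h using 1
  funext A
  simp only [diagramTensor, diagramEquiv, Equiv.coe_ofBijective, Function.comp_apply, Sum.elim_inl,
    Sum.elim_inr, Finset.coe_orderIsoOfFin_apply, Matrix.cons_val_zero, Matrix.cons_val_one,
    Matrix.cons_val_fin_one]
  exact congrArg _ (Finset.prod_subtype _ (fun x => Finset.mem_filter_univ x) _)

end Diagram

theorem Hmat_special_orthogonal_equivariant_general (n k l : ℕ)
    (f : Fin (l + k) → Fin (l + k)) (hf : ∀ x, f (f x) = x)
    (hcard : (Finset.univ.filter (fun x => f x = x)).card = n)
    (g : Matrix (Fin n) (Fin n) ℝ) (hg : g.transpose * g = 1) (hdet : g.det = 1) :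
    tensorPow n l g * Hmat n l k f hcard = Hmat n l k f hcard * tensorPow n k g := by
  refine tensorPow_mul_eq_mul_tensorPow hg ?_
  convert (isInvariantTensor_diagramTensor f hcard hf (mul_eq_one_comm.mp hg) hdet).comp_equiv
    finSumFinEquiv.symm using 2 with A
  show diagramTensor f hcard (Fin.append _ _) = _
  congr 1
  ext x
  cases x using Fin.addCases <;> simp

/-- for every `(l+k)\n`-diagram `α`, the map `H_α` is `SO(n)`-equivariant:
`g^{⊗l} ∘ H_α = H_α ∘ g^{⊗k}` for every special orthogonal matrix `g`. -/
theorem Hmat_special_orthogonal_equivariant (n k l : ℕ) (hn : 0 < n)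
    (f : Fin (l + k) → Fin (l + k)) (hf : ∀ x, f (f x) = x)
    (hcard : (Finset.univ.filter (fun x => f x = x)).card = n)
    (g : Matrix (Fin n) (Fin n) ℝ) (hg : g.transpose * g = 1) (hdet : g.det = 1) :
    tensorPow n l g * Hmat n l k f hcard = Hmat n l k f hcard * tensorPow n k g :=
  Hmat_special_orthogonal_equivariant_general n k l f hf hcard g hg hdet
end
end

section
/- For permutations σ_l ∈ S_l, σ_k ∈ S_k and any set partition π of [l+k], one has D_{(σ_l,σ_k)·π} = Q_{σ_l} ∘ D_π ∘ Q_{σ_k}^{-1}, where (σ_l,σ_k)·π is the set partition of [l+k] whose blocks are the images of the blocks of π under the relabeling τ given by τ(x) = σ_l(x) for x ≤ l and τ(l+m) = l+σ_k(m) for m ∈ [k], and Q_σ : (ℝⁿ)^{⊗m} → (ℝⁿ)^{⊗m} is the linear map permuting tensor factors by Q_σ(e_{j₁}⊗…⊗e_{j_m}) = e_{j_{σ^{-1}(1)}}⊗…⊗e_{j_{σ^{-1}(m)}}. -/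
open Classical
noncomputable section

/-- The relabeling `τ` of `[l+k]` induced by `σ_l ∈ S_l` on the top row and
`σ_k ∈ S_k` on the bottom row: `τ(x) = σ_l(x)` for `x ≤ l`, `τ(l+m) = l+σ_k(m)`. -/
def permSum (l k : ℕ) (σl : Equiv.Perm (Fin l)) (σk : Equiv.Perm (Fin k))
    (x : Fin (l + k)) : Fin (l + k) :=
  Fin.addCases (motive := fun _ => Fin (l + k))
    (fun a => Fin.castAdd k (σl a)) (fun b => Fin.natAdd l (σk b)) x

/-- The set partition `(σ_l, σ_k) · π`, whose blocks are the images of the blocks of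
`π` under the relabeling `τ` (its relation pulls back along `τ⁻¹`). -/
def relabelSetoid (l k : ℕ) (σl : Equiv.Perm (Fin l)) (σk : Equiv.Perm (Fin k))
    (π : Setoid (Fin (l + k))) : Setoid (Fin (l + k)) :=
  Setoid.comap (permSum l k σl⁻¹ σk⁻¹) π

/-- The matrix `Q_σ : (ℝⁿ)^{⊗m} → (ℝⁿ)^{⊗m}` permuting the tensor factors:
`Q_σ(e_{j₁}⊗…⊗e_{j_m}) = e_{j_{σ⁻¹(1)}}⊗…⊗e_{j_{σ⁻¹(m)}}`, i.e. `Q_σ e_J = e_{J ∘ σ⁻¹}`. -/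
def Qmat (n m : ℕ) (σ : Equiv.Perm (Fin m)) :
    Matrix (Fin m → Fin n) (Fin m → Fin n) ℝ :=
  Matrix.of fun I J => if I = J ∘ ⇑σ⁻¹ then (1 : ℝ) else 0

/-!
`Q_σ` is the permutation matrix of the reindexing `J ↦ J ∘ σ` of multi-indices, so multiplying
by it on the left or right reindexes the rows or columns of `D_π`. On the other side, relabeling
`π` by `τ` amounts to precomposing the combined index `Fin.append I J` with `τ`, which gives
`Fin.append (I ∘ σ_l) (J ∘ σ_k)`; so both sides are the submatrix of `D_π` along these reindexings.
-/

theorem Setoid.forall_comap_symm_imp_iff {α β γ : Type*} (π : Setoid α) (e : α ≃ β)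
    (f : β → γ) :
    (∀ x y, π.comap e.symm x y → f x = f y) ↔ ∀ a b, π a b → f (e a) = f (e b) := by
  simp only [Setoid.comap_rel, ← e.forall_congr_right, Equiv.symm_apply_apply]

section Relabel

variable {l k : ℕ} (σl : Equiv.Perm (Fin l)) (σk : Equiv.Perm (Fin k))

def permSumPerm : Equiv.Perm (Fin (l + k)) :=
  finSumFinEquiv.permCongr (σl.sumCongr σk)

@[simp]
lemma coe_permSumPerm : ⇑(permSumPerm σl σk) = permSum l k σl σk := by
  funext x
  cases x using Fin.addCases <;> simp [permSum, permSumPerm]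

lemma relabelSetoid_eq_comap (π : Setoid (Fin (l + k))) :
    relabelSetoid l k σl σk π = π.comap (permSumPerm σl σk).symm := by
  rw [show (permSumPerm σl σk).symm = permSumPerm σl⁻¹ σk⁻¹ from rfl, coe_permSumPerm]
  rfl

lemma append_comp_permSum {α : Type*} (I : Fin l → α) (J : Fin k → α) :
    Fin.append I J ∘ permSum l k σl σk = Fin.append (I ∘ σl) (J ∘ σk) := by
  funext x
  cases x using Fin.addCases <;> simp [permSum]

lemma Dmat_relabelSetoid (n : ℕ) (π : Setoid (Fin (l + k))) :
    Dmat n l k (relabelSetoid l k σl σk π) = (Dmat n l k π).submatrix (· ∘ σl) (· ∘ σk) := by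
  rw [relabelSetoid_eq_comap]
  ext I J
  simp only [Dmat, Matrix.of_apply, Matrix.submatrix_apply]
  congr 1
  rw [Setoid.forall_comap_symm_imp_iff, coe_permSumPerm]
  simp only [← append_comp_permSum, Function.comp_apply]

end Relabel

section Qmat

variable {n m : ℕ} (σ : Equiv.Perm (Fin m))

lemma Qmat_eq_toMatrix :
    Qmat n m σ = (σ⁻¹.arrowCongr (Equiv.refl (Fin n))).toPEquiv.toMatrix := by
  ext I J
  simp only [Qmat, Matrix.of_apply, PEquiv.toMatrix_apply, Equiv.toPEquiv_apply,
    Option.mem_def, Option.some_inj]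
  congr 1
  rw [Equiv.Perm.inv_def, Equiv.eq_comp_symm]
  rfl

lemma Qmat_mul {β : Type*} (M : Matrix (Fin m → Fin n) β ℝ) :
    Qmat n m σ * M = M.submatrix (· ∘ σ) id := by
  rw [Qmat_eq_toMatrix, PEquiv.toMatrix_toPEquiv_mul]
  rfl

lemma mul_Qmat {α : Type*} (M : Matrix α (Fin m → Fin n) ℝ) :
    M * Qmat n m σ = M.submatrix id (· ∘ ⇑σ⁻¹) := by
  rw [Qmat_eq_toMatrix, PEquiv.mul_toMatrix_toPEquiv]
  rfl

end Qmat

theorem Dmat_relabel_general (n k l : ℕ)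
    (σl : Equiv.Perm (Fin l)) (σk : Equiv.Perm (Fin k)) (π : Setoid (Fin (l + k))) :
    Dmat n l k (relabelSetoid l k σl σk π) =
      Qmat n l σl * Dmat n l k π * Qmat n k σk⁻¹ := by
  rw [Dmat_relabelSetoid, Qmat_mul, mul_Qmat, inv_inv, Matrix.submatrix_submatrix]
  rfl

/-- `D_{(σ_l,σ_k)·π} = Q_{σ_l} ∘ D_π ∘ Q_{σ_k}⁻¹`
(note `Q_{σ_k}⁻¹ = Q_{σ_k⁻¹}`). -/
theorem Dmat_relabel (n k l : ℕ) (hn : 0 < n)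
    (σl : Equiv.Perm (Fin l)) (σk : Equiv.Perm (Fin k)) (π : Setoid (Fin (l + k))) :
    Dmat n l k (relabelSetoid l k σl σk π) =
      Qmat n l σl * Dmat n l k π * Qmat n k σk⁻¹ :=
  Dmat_relabel_general n k l σl σk π
end
end

section
/- The composition of set partition diagrams is associative: for set partitions π₁ of [l+k], π₂ of [m+l] and π₃ of [q+m], one has (π₃∘π₂)∘π₁ = π₃∘(π₂∘π₁) as set partitions of [q+k], and the removed-component counts satisfy c(π₃,π₂) + c(π₃∘π₂, π₁) = c(π₂,π₁) + c(π₃, π₂∘π₁). -/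
open Classical
noncomputable section

/-!
Place π₃, π₂, π₁ on consecutive pairs of four rows Q, M, L, K (of sizes q, m, l, k) and let ≈ be
the equivalence relation they generate. Gluing the closure of π₃, π₂ on Q ⊔ M ⊔ L with π₁ along
Q ⊔ L shows that ≈ restricted to Q ⊔ L ⊔ K is the concatenation relation of (π₃ ∘ π₂, π₁), and that
the ≈-classes missing Q ⊔ L ⊔ K are the removed classes of (π₃, π₂); symmetrically with the closure
of π₂, π₁ on M ⊔ L ⊔ K glued with π₃ along M ⊔ K. Restricting further to Q ⊔ K gives associativity.
For the counts, the classes of a concatenation relation ∼ that meet the outer rows are the classes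
of the composite, so c(π₂, π₁) = #classes(∼) - #classes(π₂ ∘ π₁); both sides of the count identity
therefore equal #classes(≈) - #classes(π₃ ∘ π₂ ∘ π₁).
-/

open Function Set

namespace Setoid

variable {α β : Type*}

abbrev ClassesWithin (r : Setoid α) (p : α → Prop) : Type _ :=
  {c : Quotient r // ∀ x, Quotient.mk r x = c → p x}

theorem map_le_iff {r : Setoid α} {f : α → β} {s : Setoid β} : r.map f ≤ s ↔ r ≤ s.comap f :=
  (gi.gc _ s).trans ⟨fun h _ _ hr => h _ _ ⟨_, _, hr, rfl, rfl⟩,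
    fun h _ _ ⟨_, _, hr, ha, hb⟩ => ha ▸ hb ▸ h hr⟩

theorem gc_map_comap (f : α → β) : GaloisConnection (map · f) (comap f) :=
  fun _ _ => map_le_iff

theorem map_sup (r r' : Setoid α) (f : α → β) : (r ⊔ r').map f = r.map f ⊔ r'.map f :=
  (gc_map_comap f).l_sup

theorem map_map {γ : Type*} (r : Setoid α) (f : α → β) (g : β → γ) :
    (r.map f).map g = r.map (g ∘ f) :=
  ((gc_map_comap f).compose (gc_map_comap g)).l_unique (gc_map_comap (g ∘ f)) (fun _ => rfl)

theorem map_rel_iff_of_injective {r : Setoid α} {f : α → β} (hf : Injective f) {w w' : β} :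
    r.map f w w' ↔ w = w' ∨ ∃ a b, r a b ∧ f a = w ∧ f b = w' := by
  rw [coe_map_of_ker_le r f fun a b h => hf h ▸ r.refl a, or_comm]
  rfl

theorem map_apply_rel_iff_of_injective {r : Setoid α} {f : α → β} (hf : Injective f) {a : α}
    {w : β} : r.map f (f a) w ↔ ∃ b, r a b ∧ f b = w := by
  rw [map_rel_iff_of_injective hf]
  constructor
  · rintro (rfl | ⟨a', b, h, ha, rfl⟩)
    · exact ⟨a, r.refl a, rfl⟩
    · exact ⟨b, hf ha ▸ h, rfl⟩
  · rintro ⟨b, h, rfl⟩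
    exact Or.inr ⟨a, b, h, rfl, rfl⟩

theorem le_comap_sup_map (S : Setoid β) (t : Setoid α) (f : α → β) :
    S.comap f ⊔ t ≤ (S ⊔ t.map f).comap f :=
  sup_le (fun _ _ h => le_sup_left (a := S) h)
    (le_trans le_comap_map fun _ _ h => le_sup_right (a := S) h)

-- A path for `S ⊔ t.map f` leaves `range f` only through `S`-steps, and consecutive
-- `S`-steps merge.
theorem sup_map_rel_iff (S : Setoid β) (t : Setoid α) (f : α → β) {w w' : β} :
    (S ⊔ t.map f) w w' ↔
      S w w' ∨ ∃ a b, S w (f a) ∧ (S.comap f ⊔ t) a b ∧ S (f b) w' := by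
  constructor
  · let Ψ : Setoid β :=
    { r := fun w w' => S w w' ∨ ∃ a b, S w (f a) ∧ (S.comap f ⊔ t) a b ∧ S (f b) w'
      iseqv := by
        refine ⟨fun w => Or.inl (S.refl w), ?_, ?_⟩
        · rintro w w' (h | ⟨a, b, ha, hab, hb⟩)
          · exact Or.inl (S.symm h)
          · exact Or.inr ⟨b, a, S.symm hb, (S.comap f ⊔ t).symm hab, S.symm ha⟩
        · rintro w w' w'' (h | ⟨a, b, ha, hab, hb⟩) (h' | ⟨a', b', ha', hab', hb'⟩)
          · exact Or.inl (S.trans h h')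
          · exact Or.inr ⟨a', b', S.trans h ha', hab', hb'⟩
          · exact Or.inr ⟨a, b, ha, hab, S.trans hb h'⟩
          · have hba' : (S.comap f ⊔ t) b a' := le_sup_left (a := S.comap f) (S.trans hb ha')
            exact Or.inr ⟨a, b', ha, (S.comap f ⊔ t).trans ((S.comap f ⊔ t).trans hab hba') hab',
              hb'⟩ }
    have hΨ : S ⊔ t.map f ≤ Ψ := sup_le (fun _ _ => Or.inl) <| map_le_iff.2 fun a b h =>
      Or.inr ⟨a, b, S.refl _, le_sup_right (a := S.comap f) h, S.refl _⟩
    exact fun h => hΨ h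
  · rintro (h | ⟨a, b, ha, hab, hb⟩)
    · exact le_sup_left (a := S) h
    · exact (S ⊔ t.map f).trans (le_sup_left (a := S) ha)
        ((S ⊔ t.map f).trans (le_comap_sup_map S t f hab) (le_sup_left (a := S) hb))

theorem comap_sup_map (S : Setoid β) (t : Setoid α) (f : α → β) :
    (S ⊔ t.map f).comap f = S.comap f ⊔ t := by
  refine le_antisymm (fun a b h => ?_) (le_comap_sup_map S t f)
  rcases (sup_map_rel_iff S t f).1 h with h | ⟨a', b', ha, hab, hb⟩
  · exact le_sup_left (a := S.comap f) h
  · have hS : S.comap f ≤ S.comap f ⊔ t := le_sup_left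
    exact (S.comap f ⊔ t).trans (hS ha) ((S.comap f ⊔ t).trans hab (hS hb))

theorem card_quotient_eq_card_comap_add [Finite β] (r : Setoid β) (f : α → β) {p : β → Prop}
    (hp : ∀ w, p w ↔ w ∉ range f) :
    Nat.card (Quotient r) = Nat.card (Quotient (r.comap f)) + Nat.card (r.ClassesWithin p) := by
  have hcompl : ∀ c : Quotient r,
      c ∉ range (Quotient.mk'' ∘ f) ↔ ∀ w, Quotient.mk r w = c → p w := by
    intro c
    simp only [hp, mem_range, comp_apply, not_exists]
    exact ⟨fun h w hw a ha => h a (ha ▸ hw), fun h a ha => h _ ha a rfl⟩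
  rw [Nat.card_congr (comapQuotientEquiv f r), ← Nat.card_congr (Equiv.subtypeEquivRight hcompl),
    ← Nat.card_sum]
  exact Nat.card_congr (Equiv.sumCompl _).symm

theorem card_classesWithin_eq {f : α → β} (hf : Injective f) {r : Setoid α} {s : Setoid β}
    {p : α → Prop} {p' : β → Prop} (hle : r ≤ s.comap f) (hp : ∀ x, p x ↔ p' (f x))
    (hrange : ∀ w, p' w → w ∈ range f)
    (hclosed : ∀ x, (∀ y, r x y → p y) → ∀ w, s (f x) w → ∃ y, r x y ∧ f y = w) :
    Nat.card (r.ClassesWithin p) = Nat.card (s.ClassesWithin p') := by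
  have hclass : ∀ (x : α) (c : Quotient r), Quotient.mk r x = c →
      (∀ y, Quotient.mk r y = c → p y) → ∀ y, r x y → p y :=
    fun x c hx hc y hxy => hc y (hx ▸ Quotient.sound (r.symm hxy))
  refine Nat.card_eq_of_bijective (fun c => ⟨Quotient.map' f hle c.1, ?_⟩) ⟨?_, ?_⟩
  · obtain ⟨c, hc⟩ := c
    induction c using Quotient.inductionOn with | h x => ?_
    intro w hw
    obtain ⟨y, hxy, rfl⟩ := hclosed x (hclass x _ rfl hc) w (s.symm (Quotient.exact hw))
    exact (hp y).1 (hc y (Quotient.sound (r.symm hxy)))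
  · rintro ⟨c, hc⟩ ⟨c', hc'⟩ h
    induction c using Quotient.inductionOn with | h x => ?_
    induction c' using Quotient.inductionOn with | h x' => ?_
    obtain ⟨y, hxy, hy⟩ := hclosed x (hclass x _ rfl hc) (f x')
      (Quotient.exact (congrArg Subtype.val h))
    exact Subtype.ext (Quotient.sound (hf hy ▸ hxy))
  · rintro ⟨d, hd⟩
    induction d using Quotient.inductionOn with | h w => ?_
    obtain ⟨x, rfl⟩ := hrange w (hd w rfl)
    refine ⟨⟨Quotient.mk r x, fun y hy => (hp y).2 (hd _ ?_)⟩, rfl⟩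
    exact Quotient.sound (hle (Quotient.exact hy))

section Gluing

variable {X Y Z W : Type*} {j : X → W} {i : Y → W}

theorem comap_map_eq_map_comap {e : Z → X} {u : Z → Y} (hj : Injective j) (hi : Injective i)
    (hsq : j ∘ e = i ∘ u) (hrange : ∀ x, x ∈ range e ↔ j x ∈ range i) (σ : Setoid X) :
    (σ.map j).comap i = (σ.comap e).map u := by
  refine le_antisymm (fun y y' h => ?_) (map_le_iff.2 fun z z' h => ?_)
  · rcases (map_rel_iff_of_injective hj).1 h with h | ⟨x, x', hxx', hx, hx'⟩
    · exact hi h ▸ ((σ.comap e).map u).refl y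
    · obtain ⟨z, rfl⟩ := (hrange x).2 ⟨y, hx.symm⟩
      obtain ⟨z', rfl⟩ := (hrange x').2 ⟨y', hx'.symm⟩
      obtain rfl : u z = y := hi (hx ▸ (congrFun hsq z).symm)
      obtain rfl : u z' = y' := hi (hx' ▸ (congrFun hsq z').symm)
      exact le_comap_map hxx'
  · change σ.map j ((i ∘ u) z) ((i ∘ u) z')
    rw [← hsq]
    exact le_comap_map h

theorem card_quotient_sup_map [Finite W] (hj : Injective j)
    (hcover : ∀ w, w ∉ range i → w ∈ range j) (σ : Setoid X) (t : Setoid Y) {p : X → Prop}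
    (hp : ∀ x, p x ↔ j x ∉ range i) :
    Nat.card (Quotient (σ.map j ⊔ t.map i)) =
      Nat.card (Quotient ((σ.map j ⊔ t.map i).comap i)) + Nat.card (σ.ClassesWithin p) := by
  rw [card_quotient_eq_card_comap_add _ i (p := (· ∉ range i)) fun _ => Iff.rfl]
  congr 1
  refine (card_classesWithin_eq hj (fun _ _ h => le_sup_left (a := σ.map j) (le_comap_map h)) hp
    hcover fun x hx w h => ?_).symm
  rcases (sup_map_rel_iff _ t i).1 h with h | ⟨a, -, ha, -, -⟩
  · exact (map_apply_rel_iff_of_injective hj).1 h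
  · obtain ⟨y, hxy, hy⟩ := (map_apply_rel_iff_of_injective hj).1 ha
    exact absurd ⟨a, hy.symm⟩ ((hp y).1 (hx y hxy))

end Gluing

end Setoid

theorem Fin.comp_append_s16 {α β : Sort*} {m n : ℕ} (f : α → β) (a : Fin m → α) (b : Fin n → α) :
    f ∘ Fin.append a b = Fin.append (f ∘ a) (f ∘ b) := by
  funext x
  induction x using Fin.addCases <;> simp

theorem Fin.range_append {α : Type*} {m n : ℕ} (a : Fin m → α) (b : Fin n → α) :
    range (Fin.append a b) = range a ∪ range b := by
  rw [← Sum.elim_range, ← Fin.append_comp_sumElim]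
  exact (finSumFinEquiv.surjective.range_comp _).symm

section Diagrams

variable {k l m q : ℕ}

def ofUpper (m l k : ℕ) : Fin (m + l) → Fin m ⊕ (Fin l ⊕ Fin k) :=
  Fin.append Sum.inl (Sum.inr ∘ Sum.inl)

def ofLower (m l k : ℕ) : Fin (l + k) → Fin m ⊕ (Fin l ⊕ Fin k) :=
  Fin.append (Sum.inr ∘ Sum.inl) (Sum.inr ∘ Sum.inr)

theorem toUpper_eq_some_iff {x : Fin m ⊕ (Fin l ⊕ Fin k)} {a : Fin (m + l)} :
    toUpper m l k x = some a ↔ ofUpper m l k a = x := by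
  induction a using Fin.addCases <;> rcases x with a' | b' | c' <;>
    simp [toUpper, ofUpper, eq_comm, Fin.ext_iff] <;> omega

theorem toLower_eq_some_iff {x : Fin m ⊕ (Fin l ⊕ Fin k)} {a : Fin (l + k)} :
    toLower m l k x = some a ↔ ofLower m l k a = x := by
  induction a using Fin.addCases <;> rcases x with a' | b' | c' <;>
    simp [toLower, ofLower, eq_comm, Fin.ext_iff] <;> omega

theorem glue_eq_map_sup_map (π₂ : Setoid (Fin (m + l))) (π₁ : Setoid (Fin (l + k))) :
    glue m l k π₂ π₁ =
      Relation.Map π₂ (ofUpper m l k) (ofUpper m l k) ⊔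
        Relation.Map π₁ (ofLower m l k) (ofLower m l k) := by
  ext x y
  simp only [glue, toUpper_eq_some_iff, toLower_eq_some_iff, Pi.sup_apply, sup_Prop_eq,
    Relation.map_apply]
  exact or_congr (exists₂_congr fun _ _ => and_rotate.symm)
    (exists₂_congr fun _ _ => and_rotate.symm)

theorem eqvGen_setoid_glue (π₂ : Setoid (Fin (m + l))) (π₁ : Setoid (Fin (l + k))) :
    Relation.EqvGen.setoid (glue m l k π₂ π₁) =
      π₂.map (ofUpper m l k) ⊔ π₁.map (ofLower m l k) := by
  rw [glue_eq_map_sup_map]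
  exact Setoid.gi.gc.l_sup

theorem not_mem_range_embMK {x : Fin m ⊕ (Fin l ⊕ Fin k)} :
    x ∉ range (embMK m l k) ↔ ∃ b, x = Sum.inr (Sum.inl b) := by
  change x ∉ range (Fin.append _ _) ↔ _
  rcases x with a | b | c <;> simp [Fin.range_append]

theorem removedCount_add_card_quotient (π₂ : Setoid (Fin (m + l))) (π₁ : Setoid (Fin (l + k))) :
    removedCount m l k π₂ π₁ + Nat.card (Quotient (compSetoid m l k π₂ π₁)) =
      Nat.card (Quotient (Relation.EqvGen.setoid (glue m l k π₂ π₁))) := by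
  rw [add_comm, Setoid.card_quotient_eq_card_comap_add _ (embMK m l k)
    fun _ => not_mem_range_embMK.symm]
  rfl

def inclQML (q m l k : ℕ) : Fin q ⊕ (Fin m ⊕ Fin l) → Fin q ⊕ (Fin m ⊕ (Fin l ⊕ Fin k)) :=
  Sum.map id (Sum.map id Sum.inl)

def inclQLK (q m l k : ℕ) : Fin q ⊕ (Fin l ⊕ Fin k) → Fin q ⊕ (Fin m ⊕ (Fin l ⊕ Fin k)) :=
  Sum.map id Sum.inr

def inclQMK (q m l k : ℕ) : Fin q ⊕ (Fin m ⊕ Fin k) → Fin q ⊕ (Fin m ⊕ (Fin l ⊕ Fin k)) :=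
  Sum.map id (Sum.map id Sum.inr)

theorem inclQML_injective : Injective (inclQML q m l k) :=
  Sum.map_injective.2 ⟨injective_id, Sum.map_injective.2 ⟨injective_id, Sum.inl_injective⟩⟩

theorem inclQLK_injective : Injective (inclQLK q m l k) :=
  Sum.map_injective.2 ⟨injective_id, Sum.inr_injective⟩

theorem inclQMK_injective : Injective (inclQMK q m l k) :=
  Sum.map_injective.2 ⟨injective_id, Sum.map_injective.2 ⟨injective_id, Sum.inr_injective⟩⟩

theorem inclQML_comp_embMK : inclQML q m l k ∘ embMK q m l = inclQLK q m l k ∘ ofUpper q l k := by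
  change _ ∘ Fin.append _ _ = _
  simp only [ofUpper, Fin.comp_append_s16]
  rfl

theorem inr_comp_embMK :
    (Sum.inr ∘ embMK m l k : _ → Fin q ⊕ _) = inclQMK q m l k ∘ ofLower q m k := by
  change _ ∘ Fin.append _ _ = _
  simp only [ofLower, Fin.comp_append_s16]
  rfl

theorem inclQLK_comp_embMK : inclQLK q m l k ∘ embMK q l k = inclQMK q m l k ∘ embMK q m k := by
  change _ ∘ Fin.append _ _ = _ ∘ Fin.append _ _
  simp only [Fin.comp_append_s16]
  rfl

theorem mem_range_embMK_iff_inclQML {x : Fin q ⊕ (Fin m ⊕ Fin l)} :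
    x ∈ range (embMK q m l) ↔ inclQML q m l k x ∈ range (inclQLK q m l k) := by
  rw [← not_iff_not, not_mem_range_embMK]
  rcases x with a | u | b <;> simp [inclQML, inclQLK]

theorem mem_range_embMK_iff_inr {x : Fin m ⊕ (Fin l ⊕ Fin k)} :
    x ∈ range (embMK m l k) ↔ (Sum.inr x : Fin q ⊕ _) ∈ range (inclQMK q m l k) := by
  rw [← not_iff_not, not_mem_range_embMK]
  rcases x with u | b | c <;> simp [inclQMK]

theorem mem_range_inclQML_of_not_mem_range_inclQLK {w : Fin q ⊕ (Fin m ⊕ (Fin l ⊕ Fin k))}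
    (hw : w ∉ range (inclQLK q m l k)) : w ∈ range (inclQML q m l k) := by
  rcases w with a | u | b | c <;> simp_all [inclQML, inclQLK]

theorem mem_range_inr_of_not_mem_range_inclQMK {w : Fin q ⊕ (Fin m ⊕ (Fin l ⊕ Fin k))}
    (hw : w ∉ range (inclQMK q m l k)) : w ∈ range Sum.inr := by
  rcases w with a | u | b | c <;> simp_all [inclQMK]

def fourRowSetoid (π₁ : Setoid (Fin (l + k))) (π₂ : Setoid (Fin (m + l)))
    (π₃ : Setoid (Fin (q + m))) : Setoid (Fin q ⊕ (Fin m ⊕ (Fin l ⊕ Fin k))) :=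
  π₃.map (Fin.append Sum.inl (Sum.inr ∘ Sum.inl)) ⊔
    π₂.map (Fin.append (Sum.inr ∘ Sum.inl) (Sum.inr ∘ Sum.inr ∘ Sum.inl)) ⊔
    π₁.map (Fin.append (Sum.inr ∘ Sum.inr ∘ Sum.inl) (Sum.inr ∘ Sum.inr ∘ Sum.inr))

variable (π₁ : Setoid (Fin (l + k))) (π₂ : Setoid (Fin (m + l))) (π₃ : Setoid (Fin (q + m)))

theorem fourRowSetoid_eq_left :
    fourRowSetoid π₁ π₂ π₃ =
      (Relation.EqvGen.setoid (glue q m l π₃ π₂)).map (inclQML q m l k) ⊔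
        (π₁.map (ofLower q l k)).map (inclQLK q m l k) := by
  simp only [eqvGen_setoid_glue, Setoid.map_sup, Setoid.map_map, ofUpper, ofLower, Fin.comp_append_s16]
  rfl

theorem fourRowSetoid_eq_right :
    fourRowSetoid π₁ π₂ π₃ =
      (Relation.EqvGen.setoid (glue m l k π₂ π₁)).map Sum.inr ⊔
        (π₃.map (ofUpper q m k)).map (inclQMK q m l k) := by
  simp only [eqvGen_setoid_glue, Setoid.map_sup, Setoid.map_map, ofUpper, ofLower, Fin.comp_append_s16]
  rw [fourRowSetoid, sup_comm _ (π₃.map _), ← sup_assoc]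
  rfl

theorem comap_inclQLK_fourRowSetoid :
    (fourRowSetoid π₁ π₂ π₃).comap (inclQLK q m l k) =
      Relation.EqvGen.setoid (glue q l k (compSetoid q m l π₃ π₂) π₁) := by
  rw [fourRowSetoid_eq_left, Setoid.comap_sup_map, Setoid.comap_map_eq_map_comap inclQML_injective
    inclQLK_injective inclQML_comp_embMK fun _ => mem_range_embMK_iff_inclQML,
    eqvGen_setoid_glue (compSetoid q m l π₃ π₂)]
  rfl

theorem comap_inclQMK_fourRowSetoid :
    (fourRowSetoid π₁ π₂ π₃).comap (inclQMK q m l k) =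
      Relation.EqvGen.setoid (glue q m k π₃ (compSetoid m l k π₂ π₁)) := by
  rw [fourRowSetoid_eq_right, Setoid.comap_sup_map, Setoid.comap_map_eq_map_comap
    Sum.inr_injective inclQMK_injective inr_comp_embMK fun _ => mem_range_embMK_iff_inr,
    eqvGen_setoid_glue π₃, sup_comm]
  rfl

theorem card_quotient_fourRowSetoid_eq_left :
    Nat.card (Quotient (fourRowSetoid π₁ π₂ π₃)) =
      Nat.card (Quotient (Relation.EqvGen.setoid (glue q l k (compSetoid q m l π₃ π₂) π₁))) +
        removedCount q m l π₃ π₂ := by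
  rw [← comap_inclQLK_fourRowSetoid, fourRowSetoid_eq_left]
  exact Setoid.card_quotient_sup_map inclQML_injective
    (fun _ => mem_range_inclQML_of_not_mem_range_inclQLK) _ _
    fun _ => not_mem_range_embMK.symm.trans (not_congr mem_range_embMK_iff_inclQML)

theorem card_quotient_fourRowSetoid_eq_right :
    Nat.card (Quotient (fourRowSetoid π₁ π₂ π₃)) =
      Nat.card (Quotient (Relation.EqvGen.setoid (glue q m k π₃ (compSetoid m l k π₂ π₁)))) +
        removedCount m l k π₂ π₁ := by
  rw [← comap_inclQMK_fourRowSetoid, fourRowSetoid_eq_right]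
  exact Setoid.card_quotient_sup_map Sum.inr_injective
    (fun _ => mem_range_inr_of_not_mem_range_inclQMK) _ _
    fun _ => not_mem_range_embMK.symm.trans (not_congr mem_range_embMK_iff_inr)

end Diagrams

/-- composition of set partition diagrams is associative,
`(π₃∘π₂)∘π₁ = π₃∘(π₂∘π₁)` as set partitions of `[q+k]`, and the removed-component
counts satisfy `c(π₃,π₂) + c(π₃∘π₂,π₁) = c(π₂,π₁) + c(π₃,π₂∘π₁)`. -/
theorem compSetoid_assoc (k l m q : ℕ)
    (π₁ : Setoid (Fin (l + k))) (π₂ : Setoid (Fin (m + l))) (π₃ : Setoid (Fin (q + m))) :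
    compSetoid q l k (compSetoid q m l π₃ π₂) π₁ =
      compSetoid q m k π₃ (compSetoid m l k π₂ π₁) ∧
    removedCount q m l π₃ π₂ + removedCount q l k (compSetoid q m l π₃ π₂) π₁ =
      removedCount m l k π₂ π₁ + removedCount q m k π₃ (compSetoid m l k π₂ π₁) := by
  have hassoc : compSetoid q l k (compSetoid q m l π₃ π₂) π₁ =
      compSetoid q m k π₃ (compSetoid m l k π₂ π₁) := by
    change (Relation.EqvGen.setoid (glue q l k _ π₁)).comap (embMK q l k) =
      (Relation.EqvGen.setoid (glue q m k π₃ _)).comap (embMK q m k)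
    rw [← comap_inclQLK_fourRowSetoid, ← comap_inclQMK_fourRowSetoid]
    exact congrArg (fun f => (fourRowSetoid π₁ π₂ π₃).comap f) inclQLK_comp_embMK
  have hL := card_quotient_fourRowSetoid_eq_left π₁ π₂ π₃
  have hR := card_quotient_fourRowSetoid_eq_right π₁ π₂ π₃
  rw [← removedCount_add_card_quotient] at hL hR
  rw [hassoc] at hL
  exact ⟨hassoc, by omega⟩
end
end

section
/- Let n = 2m be even. For perfect matchings β₁ of [l+k] and β₂ of [p+q], under the canonical isomorphisms (ℝⁿ)^{⊗(k+q)} ≅ (ℝⁿ)^{⊗k} ⊗ (ℝⁿ)^{⊗q} and (ℝⁿ)^{⊗(l+p)} ≅ (ℝⁿ)^{⊗l} ⊗ (ℝⁿ)^{⊗p}, one has F_{β₁⊗β₂} = F_{β₁} ⊗ F_{β₂}, where β₁⊗β₂ is the perfect matching of [(l+p)+(k+q)] obtained by placing the two diagrams side by side. -/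
open Classical
noncomputable section

/-- The relabeling of the vertex set `[l+k]` of `β₁` into the side-by-side vertex set
`[(l+p)+(k+q)]`: `x ↦ x` for `x ≤ l` and `l+y ↦ (l+p)+y` for `y ∈ [k]`. -/
def embLeft (l k p q : ℕ) (x : Fin (l + k)) : Fin ((l + p) + (k + q)) :=
  Fin.addCases (motive := fun _ => Fin ((l + p) + (k + q)))
    (fun a => Fin.castAdd (k + q) (Fin.castAdd p a))
    (fun b => Fin.natAdd (l + p) (Fin.castAdd q b)) x

/-- The relabeling of the vertex set `[p+q]` of `β₂` into the side-by-side vertex set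
`[(l+p)+(k+q)]`: `x ↦ l+x` for `x ≤ p` and `p+y ↦ (l+p)+k+y` for `y ∈ [q]`. -/
def embRight (l k p q : ℕ) (x : Fin (p + q)) : Fin ((l + p) + (k + q)) :=
  Fin.addCases (motive := fun _ => Fin ((l + p) + (k + q)))
    (fun a => Fin.castAdd (k + q) (Fin.natAdd l a))
    (fun b => Fin.natAdd (l + p) (Fin.natAdd k b)) x

/-!
Each block of `β₁ ⊗ β₂` is the image of a block of `β₁` or of `β₂`, and the two relabelings
preserve the order of vertices, which row a vertex lies in, and the basis index attached to it.
So writing `F_β` as a product over all vertices, where a vertex contributes the weight of its block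
if it is the block's smaller end and `1` otherwise, the product for `β₁ ⊗ β₂` splits into the
products for `β₁` and for `β₂`.
-/

def edgeFactor (m l k : ℕ) (f : Fin (l + k) → Fin (l + k))
    (I : Fin l → Fin (2 * m)) (J : Fin k → Fin (2 * m)) (x : Fin (l + k)) : ℝ :=
  if x < f x then
    if (x.val < l ↔ (f x).val < l) then eps m (Fin.append I J x) (Fin.append I J (f x))
    else if Fin.append I J x = Fin.append I J (f x) then 1 else 0
  else 1

lemma Fmat_apply_eq_prod_edgeFactor (m l k : ℕ) (f : Fin (l + k) → Fin (l + k))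
    (I : Fin l → Fin (2 * m)) (J : Fin k → Fin (2 * m)) :
    Fmat m l k f I J = ∏ x, edgeFactor m l k f I J x := by
  rw [Fmat, Matrix.of_apply, Finset.prod_filter]
  rfl

lemma edgeFactor_comp {m l k l' k' : ℕ} {f : Fin (l + k) → Fin (l + k)}
    {F : Fin (l' + k') → Fin (l' + k')} {e : Fin (l + k) → Fin (l' + k')}
    {I : Fin l → Fin (2 * m)} {J : Fin k → Fin (2 * m)}
    {I' : Fin l' → Fin (2 * m)} {J' : Fin k' → Fin (2 * m)}
    (he : StrictMono e) (hrow : ∀ x, (e x).val < l' ↔ x.val < l)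
    (hidx : ∀ x, Fin.append I' J' (e x) = Fin.append I J x)
    {x : Fin (l + k)} (hF : F (e x) = e (f x)) :
    edgeFactor m l' k' F I' J' (e x) = edgeFactor m l k f I J x := by
  simp only [edgeFactor, hF, he.lt_iff_lt, hrow, hidx]

section embeddings

variable {l k p q : ℕ}

lemma embLeft_val (x : Fin (l + k)) :
    (embLeft l k p q x).val = if x.val < l then x.val else x.val + p := by
  cases x using Fin.addCases <;> simp [embLeft]; omega

lemma embRight_val (x : Fin (p + q)) :
    (embRight l k p q x).val = if x.val < p then l + x.val else l + k + x.val := by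
  cases x using Fin.addCases <;> simp [embRight]; omega

lemma embLeft_strictMono : StrictMono (embLeft l k p q) := by
  intro x y h
  rw [Fin.lt_def, embLeft_val, embLeft_val]
  split_ifs <;> omega

lemma embRight_strictMono : StrictMono (embRight l k p q) := by
  intro x y h
  rw [Fin.lt_def, embRight_val, embRight_val]
  split_ifs <;> omega

lemma embLeft_val_lt_iff (x : Fin (l + k)) : (embLeft l k p q x).val < l + p ↔ x.val < l := by
  rw [embLeft_val]; split_ifs <;> omega

lemma embRight_val_lt_iff (x : Fin (p + q)) : (embRight l k p q x).val < l + p ↔ x.val < p := by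
  have := x.isLt
  rw [embRight_val]; split_ifs <;> omega

variable {m : ℕ} (I : Fin l → Fin (2 * m)) (X : Fin p → Fin (2 * m))
  (J : Fin k → Fin (2 * m)) (Y : Fin q → Fin (2 * m))

lemma append_append_embLeft (x : Fin (l + k)) :
    Fin.append (Fin.append I X) (Fin.append J Y) (embLeft l k p q x) = Fin.append I J x := by
  cases x using Fin.addCases <;> simp [embLeft]

lemma append_append_embRight (x : Fin (p + q)) :
    Fin.append (Fin.append I X) (Fin.append J Y) (embRight l k p q x) = Fin.append X Y x := by
  cases x using Fin.addCases <;> simp [embRight]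

lemma prod_univ_eq_prod_embLeft_mul_prod_embRight {M : Type*} [CommMonoid M]
    (g : Fin ((l + p) + (k + q)) → M) :
    ∏ z, g z = (∏ x, g (embLeft l k p q x)) * ∏ y, g (embRight l k p q y) := by
  simp only [Fin.prod_univ_add, embLeft, embRight, Fin.addCases_left, Fin.addCases_right]
  exact mul_mul_mul_comm _ _ _ _

end embeddings

theorem Fmat_tensor_general (m l k p q : ℕ)
    (f₁ : Fin (l + k) → Fin (l + k))
    (f₂ : Fin (p + q) → Fin (p + q))
    (F : Fin ((l + p) + (k + q)) → Fin ((l + p) + (k + q)))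
    (hF₁ : ∀ x, F (embLeft l k p q x) = embLeft l k p q (f₁ x))
    (hF₂ : ∀ x, F (embRight l k p q x) = embRight l k p q (f₂ x))
    (I : Fin l → Fin (2 * m)) (X : Fin p → Fin (2 * m))
    (J : Fin k → Fin (2 * m)) (Y : Fin q → Fin (2 * m)) :
    Fmat m (l + p) (k + q) F (Fin.append I X) (Fin.append J Y) =
      Fmat m l k f₁ I J * Fmat m p q f₂ X Y := by
  simp only [Fmat_apply_eq_prod_edgeFactor, prod_univ_eq_prod_embLeft_mul_prod_embRight,
    edgeFactor_comp embLeft_strictMono embLeft_val_lt_iff (append_append_embLeft I X J Y) (hF₁ _),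
    edgeFactor_comp embRight_strictMono embRight_val_lt_iff (append_append_embRight I X J Y) (hF₂ _)]

/-- for perfect matchings `β₁` of `[l+k]` and `β₂` of `[p+q]` (encoded by
fixed-point-free involutions `f₁`, `f₂`), and `F` the side-by-side matching `β₁ ⊗ β₂`
of `[(l+p)+(k+q)]` (characterized by commuting with the two relabelings), one has
`F_{β₁⊗β₂} = F_{β₁} ⊗ F_{β₂}` under the canonical identifications of tensor powers;
entrywise, `F_{β₁⊗β₂}((I,X),(J,Y)) = F_{β₁}(I,J) · F_{β₂}(X,Y)`. -/
theorem Fmat_tensor (m l k p q : ℕ) (hm : 0 < m)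
    (f₁ : Fin (l + k) → Fin (l + k)) (hf₁ : ∀ x, f₁ (f₁ x) = x) (hf₁' : ∀ x, f₁ x ≠ x)
    (f₂ : Fin (p + q) → Fin (p + q)) (hf₂ : ∀ x, f₂ (f₂ x) = x) (hf₂' : ∀ x, f₂ x ≠ x)
    (F : Fin ((l + p) + (k + q)) → Fin ((l + p) + (k + q)))
    (hF₁ : ∀ x, F (embLeft l k p q x) = embLeft l k p q (f₁ x))
    (hF₂ : ∀ x, F (embRight l k p q x) = embRight l k p q (f₂ x))
    (I : Fin l → Fin (2 * m)) (X : Fin p → Fin (2 * m))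
    (J : Fin k → Fin (2 * m)) (Y : Fin q → Fin (2 * m)) :
    Fmat m (l + p) (k + q) F (Fin.append I X) (Fin.append J Y) =
      Fmat m l k f₁ I J * Fmat m p q f₂ X Y :=
  Fmat_tensor_general m l k p q f₁ f₂ F hF₁ hF₂ I X J Y
end
end
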